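/- Hoffman's formula: in (𝔥¹, ∗), for l ≥ 1 and any word z_{k₁}⋯z_{k_d}, one has z_l ∗ z_{k₁}⋯z_{k_d} = ∑_{i=0}^{d} z_{k₁}⋯z_{k_i} z_l z_{k_{i+1}}⋯z_{k_d} + ∑_{i=1}^{d} z_{k₁}⋯z_{k_{i-1}} z_{k_i+l} z_{k_{i+1}}⋯z_{k_d}. -/

import Mathlib

/- The harmonic product on 𝔥¹ = ℚ + ℚ⟨x,y⟩y, identified with the free
noncommutative algebra on the generators z_k (k ≥ 1), i.e. the monoid algebra
of the free monoid on ℕ+, is commutative. -/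

noncomputable section

/-- 𝔥¹, the monoid algebra ℚ⟨z₁, z₂, …⟩ on the free monoid on ℕ+. -/
abbrev Hone : Type := MonoidAlgebra ℚ (FreeMonoid ℕ+)

/-- The harmonic product of two words, defined inductively. -/
def hword : List ℕ+ → List ℕ+ → Hone
  | [], L => MonoidAlgebra.single (FreeMonoid.ofList L) 1
  | K, [] => MonoidAlgebra.single (FreeMonoid.ofList K) 1
  | k :: K, l :: L =>
      MonoidAlgebra.single (FreeMonoid.of k) 1 * hword K (l :: L)
      + MonoidAlgebra.single (FreeMonoid.of l) 1 * hword (k :: K) L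
      + MonoidAlgebra.single (FreeMonoid.of (k + l)) 1 * hword K L
termination_by K L => K.length + L.length

/-- The harmonic product, extended ℚ-bilinearly to all of 𝔥¹. -/
def hstar (a b : Hone) : Hone :=
  a.coeff.sum fun w c => b.coeff.sum fun w' c' => (c * c') • hword (FreeMonoid.toList w) (FreeMonoid.toList w')

/-! Induction on the word K. Since the left factor z_l has a single letter, the recursion for ∗
gives z_l ∗ z_k K = z_l z_k K + z_k (z_l ∗ K) + z_{k+l} K, and the insertion and contraction sums
of Hoffman's formula obey the same recursion in their first letter. -/

open MonoidAlgebra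

theorem MonoidAlgebra.single_of_mul_single_ofList {R α : Type*} [Semiring R] (k : α)
    (w : List α) (r s : R) :
    single (FreeMonoid.of k) r * single (FreeMonoid.ofList w) s =
      single (FreeMonoid.ofList (k :: w)) (r * s) := by
  rw [single_mul_single]
  rfl

theorem hstar_single_single (u v : FreeMonoid ℕ+) (a b : ℚ) :
    hstar (single u a) (single v b) = (a * b) • hword u.toList v.toList := by
  simp [hstar, coeff_single]

theorem hword_nil_left (L : List ℕ+) : hword [] L = single (FreeMonoid.ofList L) 1 := by
  rw [hword]

theorem hword_nil_right (K : List ℕ+) : hword K [] = single (FreeMonoid.ofList K) 1 := by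
  cases K <;> simp [hword]

theorem hword_cons_cons (k l : ℕ+) (K L : List ℕ+) :
    hword (k :: K) (l :: L) =
      single (FreeMonoid.of k) 1 * hword K (l :: L) + single (FreeMonoid.of l) 1 * hword (k :: K) L
        + single (FreeMonoid.of (k + l)) 1 * hword K L := by
  rw [hword]

def insertionSum (l : ℕ+) (K : List ℕ+) : Hone :=
  ∑ i ∈ Finset.range (K.length + 1), single (FreeMonoid.ofList (K.take i ++ [l] ++ K.drop i)) 1

def contractionSum (l : ℕ+) (K : List ℕ+) : Hone :=
  ∑ i : Fin K.length,
    single (FreeMonoid.ofList (K.take (i : ℕ) ++ [K.get i + l] ++ K.drop ((i : ℕ) + 1))) 1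

theorem insertionSum_nil (l : ℕ+) : insertionSum l [] = single (FreeMonoid.ofList [l]) 1 := by
  simp [insertionSum]

theorem insertionSum_cons (l k : ℕ+) (K : List ℕ+) :
    insertionSum l (k :: K) =
      single (FreeMonoid.ofList (l :: k :: K)) 1 + single (FreeMonoid.of k) 1 * insertionSum l K := by
  simp only [insertionSum, Finset.mul_sum, single_of_mul_single_ofList, mul_one, List.length_cons]
  rw [Finset.sum_range_succ']
  simp [add_comm]

theorem contractionSum_nil (l : ℕ+) : contractionSum l [] = 0 := by
  simp [contractionSum]

theorem contractionSum_cons (l k : ℕ+) (K : List ℕ+) :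
    contractionSum l (k :: K) =
      single (FreeMonoid.ofList ((k + l) :: K)) 1 + single (FreeMonoid.of k) 1 * contractionSum l K := by
  simp only [contractionSum, Finset.mul_sum, single_of_mul_single_ofList, mul_one, List.length_cons]
  rw [Fin.sum_univ_succ]
  simp

theorem hword_singleton_left (l : ℕ+) (K : List ℕ+) :
    hword [l] K = insertionSum l K + contractionSum l K := by
  induction K with
  | nil => rw [hword_nil_right, insertionSum_nil, contractionSum_nil, add_zero]
  | cons k K ih =>
    rw [hword_cons_cons, ih, hword_nil_left, hword_nil_left, insertionSum_cons, contractionSum_cons,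
      single_of_mul_single_ofList, single_of_mul_single_ofList, mul_add, add_comm l k, mul_one]
    abel

/-- Hoffman's formula for the harmonic product z_l ∗ z_{k₁}⋯z_{k_d}. -/
theorem hoffman_formula (l : ℕ+) (K : List ℕ+) :
    hstar (MonoidAlgebra.single (FreeMonoid.of l) 1)
        (MonoidAlgebra.single (FreeMonoid.ofList K) 1)
      = (∑ i ∈ Finset.range (K.length + 1),
          MonoidAlgebra.single (FreeMonoid.ofList (K.take i ++ [l] ++ K.drop i)) (1 : ℚ))
      + ∑ i : Fin K.length,
          MonoidAlgebra.single
            (FreeMonoid.ofList (K.take (i : ℕ) ++ [K.get i + l] ++ K.drop ((i : ℕ) + 1))) (1 : ℚ) := by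
  rw [hstar_single_single, mul_one, one_smul]
  exact hword_singleton_left l K
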